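/- Let n ≥ 2 be an integer, m₀ > n a real number, H a symmetric n×n real matrix (entries indexed by {1,…,n}), and u, w real numbers such that the trace of H equals −u + w. Then Σ_{i,j=1}^n H_{ij}² ≥ (m₀/(m₀−1))·Σ_{j=1}^n H_{1j}² + u²/(m₀−1) + 2u·H_{11}/(m₀−1) − w²/(m₀−n). -/
import Mathlib

lemma final_ineq (n : ℕ) (hn : 2 ≤ n) (m₀ : ℝ) (hm : (n : ℝ) < m₀)
    (S a D u w L : ℝ)
    (h1 : 2 * S - a ^ 2 + D ≤ L)
    (h2 : (-u + w - a) ^ 2 ≤ ((n : ℝ) - 1) * D)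
    (h3 : a ^ 2 ≤ S) :
    m₀ / (m₀ - 1) * S + u ^ 2 / (m₀ - 1) + 2 * u * a / (m₀ - 1) - w ^ 2 / (m₀ - n) ≤ L := by
  have hn2 : (2 : ℝ) ≤ (n : ℝ) := by exact_mod_cast hn
  have hP : (0 : ℝ) < m₀ - 1 := by linarith
  have hQ : (0 : ℝ) < m₀ - n := by linarith
  have hn1 : (1 : ℝ) ≤ (n : ℝ) - 1 := by linarith
  have step1 : (u + a) ^ 2 / (m₀ - 1) - w ^ 2 / (m₀ - n) ≤ D := by
    rw [div_sub_div _ _ hP.ne' hQ.ne', div_le_iff₀ (mul_pos hP hQ)]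
    nlinarith [sq_nonneg ((m₀ - n) * (-u + w - a) + ((n : ℝ) - 1) * w),
      mul_le_mul_of_nonneg_left h2 (mul_pos hP hQ).le,
      mul_pos hP hQ, sq_nonneg (-u + w - a)]
  have step3 : (S - a ^ 2) / (m₀ - 1) ≤ S - a ^ 2 :=
    div_le_self (by linarith) (by linarith)
  have e1 : m₀ / (m₀ - 1) * S + u ^ 2 / (m₀ - 1) + 2 * u * a / (m₀ - 1) - w ^ 2 / (m₀ - n)
      = S + (S - a ^ 2) / (m₀ - 1) + ((u + a) ^ 2 / (m₀ - 1) - w ^ 2 / (m₀ - n)) := by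
    field_simp
    ring
  rw [e1]
  linarith

theorem stmt_8 (n : ℕ) (hn : 2 ≤ n) (m₀ : ℝ) (hm₀ : (n : ℝ) < m₀)
    (H : Matrix (Fin n) (Fin n) ℝ) (hH : H.IsSymm)
    (u w : ℝ) (htr : Matrix.trace H = -u + w) :
    ∑ i : Fin n, ∑ j : Fin n, H i j ^ 2
      ≥ (m₀ / (m₀ - 1)) * ∑ j : Fin n, H ⟨0, by omega⟩ j ^ 2
        + u ^ 2 / (m₀ - 1)
        + 2 * u * H ⟨0, by omega⟩ ⟨0, by omega⟩ / (m₀ - 1)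
        - w ^ 2 / (m₀ - (n : ℝ)) := by
  have hn0 : 0 < n := by omega
  set e0 : Fin n := ⟨0, by omega⟩ with he0
  set S : ℝ := ∑ j : Fin n, H e0 j ^ 2 with hS
  set a : ℝ := H e0 e0 with ha
  set D : ℝ := ∑ i ∈ Finset.univ.erase e0, H i i ^ 2 with hD
  set L : ℝ := ∑ i : Fin n, ∑ j : Fin n, H i j ^ 2 with hL
  -- a^2 ≤ S
  have h3 : a ^ 2 ≤ S :=
    Finset.single_le_sum (f := fun j => H e0 j ^ 2) (fun j _ => sq_nonneg _) (Finset.mem_univ e0)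
  -- trace split
  have htr2 : a + ∑ i ∈ Finset.univ.erase e0, H i i = -u + w := by
    rw [← htr]
    exact Finset.add_sum_erase _ (fun i => H i i) (Finset.mem_univ e0)
  have hsumdiag : ∑ i ∈ Finset.univ.erase e0, H i i = -u + w - a := by linarith
  -- Cauchy-Schwarz
  have hcard : ((Finset.univ.erase e0).card : ℝ) = (n : ℝ) - 1 := by
    rw [Finset.card_erase_of_mem (Finset.mem_univ e0), Finset.card_univ, Fintype.card_fin]
    rw [Nat.cast_sub (by omega : 1 ≤ n), Nat.cast_one]
  have h2 : (-u + w - a) ^ 2 ≤ ((n : ℝ) - 1) * D := by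
    have := sq_sum_le_card_mul_sum_sq (s := Finset.univ.erase e0) (f := fun i => H i i)
    rw [hsumdiag, hcard] at this
    exact this
  -- row/column/diagonal bound
  have hrow : ∀ i ∈ Finset.univ.erase e0, H i e0 ^ 2 + H i i ^ 2 ≤ ∑ j : Fin n, H i j ^ 2 := by
    intro i hi
    have hne : e0 ≠ i := (Finset.ne_of_mem_erase hi).symm
    have hpair : ∑ j ∈ ({e0, i} : Finset (Fin n)), H i j ^ 2 = H i e0 ^ 2 + H i i ^ 2 :=
      Finset.sum_pair hne
    rw [← hpair]
    exact Finset.sum_le_sum_of_subset_of_nonneg (Finset.subset_univ _)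
      (fun _ _ _ => sq_nonneg _)
  have hcol : ∑ i ∈ Finset.univ.erase e0, H i e0 ^ 2 = S - a ^ 2 := by
    have : ∑ i ∈ Finset.univ.erase e0, H i e0 ^ 2
        = ∑ i ∈ Finset.univ.erase e0, H e0 i ^ 2 := by
      apply Finset.sum_congr rfl
      intro i _
      rw [hH.apply i e0]
    rw [this]
    have hsplit : H e0 e0 ^ 2 + ∑ x ∈ Finset.univ.erase e0, H e0 x ^ 2
        = ∑ x : Fin n, H e0 x ^ 2 :=
      Finset.add_sum_erase Finset.univ (fun j => H e0 j ^ 2) (Finset.mem_univ e0)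
    rw [hS, ha]
    linarith [hsplit]
  have h1 : 2 * S - a ^ 2 + D ≤ L := by
    have hLsplit : L = S + ∑ i ∈ Finset.univ.erase e0, ∑ j : Fin n, H i j ^ 2 := by
      rw [hL, ← Finset.add_sum_erase Finset.univ (fun i => ∑ j : Fin n, H i j ^ 2)
        (Finset.mem_univ e0)]
    have hsum : ∑ i ∈ Finset.univ.erase e0, (H i e0 ^ 2 + H i i ^ 2)
        ≤ ∑ i ∈ Finset.univ.erase e0, ∑ j : Fin n, H i j ^ 2 :=
      Finset.sum_le_sum hrow
    rw [Finset.sum_add_distrib, hcol] at hsum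
    rw [hLsplit]
    rw [hD]
    linarith
  have := final_ineq n hn m₀ hm₀ S a D u w L h1 h2 h3
  rw [ge_iff_le]
  exact this
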